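/- Let ρ_k ≥ 0 with Σ_k ρ_k =: N < ∞ and φ_k an orthonormal family in H¹(0,1) with E := Σ_k ρ_k ‖φ_k‖_{H¹}² < ∞. Then n(x) = Σ_k ρ_k |φ_k(x)|² satisfies ‖n'‖_{L²(0,1)} ≤ C N^{1/4} E^{3/4} for a universal constant C. -/

import Mathlib

/-!
Write `E_k = ‖φ_k‖²_{H¹}`; since `∫ |φ_k|² = 1`, `E_k = 1 + ‖φ_k'‖²_{L²} ≥ 1`. The derivative of
`|φ_k|²` is `2 Re(φ̄_k φ_k')`, so comparing `|φ_k(x)|²` with its value at a point where it is at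
most its mean `1`, and integrating `2ab ≤ t a² + b² / t` with `t = √E_k`, gives
`‖φ_k‖²_∞ ≤ 3 √E_k`. Hence `‖2 Re(φ̄_k φ_k')‖_{L²} ≤ 2 ‖φ_k‖_∞ ‖φ_k'‖_{L²} ≤ √12 E_k^{3/4}`.
Minkowski's inequality for the series `n' = Σ_k ρ_k 2 Re(φ̄_k φ_k')` in `L²` and the weighted
Hölder inequality `Σ_k ρ_k E_k^{3/4} ≤ (Σ_k ρ_k)^{1/4} (Σ_k ρ_k E_k)^{3/4}` conclude.
-/

open MeasureTheory Set

theorem two_mul_le_mul_sq_add_inv_mul_sq {t : ℝ} (ht : 0 < t) (a b : ℝ) :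
    2 * a * b ≤ t * a ^ 2 + t⁻¹ * b ^ 2 := by
  have h := mul_nonneg (inv_nonneg.2 ht.le) (sq_nonneg (t * a - b))
  have ht' : t⁻¹ * t = 1 := inv_mul_cancel₀ ht.ne'
  nlinarith

theorem Real.tsum_mul_rpow_le_weight_mul_rpow {ι : Type*} {w f : ι → ℝ} (hw : ∀ i, 0 ≤ w i)
    (hf : ∀ i, 0 ≤ f i) (hw_sum : Summable w) (hwf_sum : Summable fun i => w i * f i)
    {r : ℝ} (hr₀ : 0 < r) (hr₁ : r ≤ 1) :
    ∑' i, w i * f i ^ r ≤ (∑' i, w i) ^ (1 - r) * (∑' i, w i * f i) ^ r := by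
  refine Real.tsum_le_of_sum_le (fun i => mul_nonneg (hw i) (Real.rpow_nonneg (hf i) r))
    fun s => ?_
  have hp : 1 ≤ r⁻¹ := (one_le_inv₀ hr₀).2 hr₁
  have hHolder := Real.inner_le_weight_mul_Lp_of_nonneg s hp w (fun i => f i ^ r) hw
    (fun i => Real.rpow_nonneg (hf i) r)
  simp only [inv_inv, ← Real.rpow_mul (hf _), mul_inv_cancel₀ hr₀.ne', Real.rpow_one]
    at hHolder
  have hws : 0 ≤ ∑ i ∈ s, w i := Finset.sum_nonneg fun i _ => hw i
  have hwfs : 0 ≤ ∑ i ∈ s, w i * f i := Finset.sum_nonneg fun i _ => mul_nonneg (hw i) (hf i)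
  refine hHolder.trans <| mul_le_mul ?_ ?_ (Real.rpow_nonneg hwfs r)
    (Real.rpow_nonneg (tsum_nonneg hw) _)
  · exact Real.rpow_le_rpow hws (hw_sum.sum_le_tsum s fun i _ => hw i) (by linarith)
  · exact Real.rpow_le_rpow hwfs
      (hwf_sum.sum_le_tsum s fun i _ => mul_nonneg (hw i) (hf i)) hr₀.le

theorem Complex.re_conj_mul_eq_inner (u v : ℂ) : ((starRingEnd ℂ) u * v).re = inner ℝ u v := by
  rw [Complex.inner, mul_comm]

namespace MeasureTheory

variable {α : Type*} [MeasurableSpace α] {μ : Measure α}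

theorem Lp.norm_two_eq_sqrt_integral_sq (F : Lp ℝ 2 μ) : ‖F‖ = √(∫ x, F x ^ 2 ∂μ) := by
  rw [← Real.sqrt_sq (norm_nonneg F), ← real_inner_self_eq_norm_sq, L2.inner_def]
  simp [sq]

theorem sqrt_integral_sq_tsum_le {g : ℕ → α → ℝ} (hg : ∀ k, MemLp (g k) 2 μ)
    (hsum : Summable fun k => √(∫ x, g k x ^ 2 ∂μ)) :
    √(∫ x, (∑' k, g k x) ^ 2 ∂μ) ≤ ∑' k, √(∫ x, g k x ^ 2 ∂μ) := by
  set G : ℕ → Lp ℝ 2 μ := fun k => (hg k).toLp (g k)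
  have hG : ∀ k, ‖G k‖ = √(∫ x, g k x ^ 2 ∂μ) := fun k => by
    rw [Lp.norm_two_eq_sqrt_integral_sq]
    congr 1
    exact integral_congr_ae <| by filter_upwards [(hg k).coeFn_toLp] with x hx; rw [hx]
  have hG_sum : Summable fun k => ‖G k‖ := by simpa only [hG] using hsum
  have hae : (fun x => ∑' k, g k x) =ᵐ[μ] ⇑(∑' k, G k) := by
    filter_upwards [Lp.coeFn_tsum (tsum_enorm_ne_top_iff_summable_norm.2 hG_sum),
      ae_all_iff.2 fun k => (hg k).coeFn_toLp] with x hx_sum hx_G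
    rw [hx_sum]
    exact tsum_congr fun k => (hx_G k).symm
  calc √(∫ x, (∑' k, g k x) ^ 2 ∂μ) = ‖∑' k, G k‖ := by
        rw [Lp.norm_two_eq_sqrt_integral_sq]
        exact congrArg _ (integral_congr_ae (hae.fun_comp (· ^ 2)))
    _ ≤ ∑' k, ‖G k‖ := norm_tsum_le_tsum_norm hG_sum
    _ = ∑' k, √(∫ x, g k x ^ 2 ∂μ) := tsum_congr hG

theorem sqrt_integral_sq_const_mul {c : ℝ} (hc : 0 ≤ c) (f : α → ℝ) :
    √(∫ x, (c * f x) ^ 2 ∂μ) = c * √(∫ x, f x ^ 2 ∂μ) := by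
  simp_rw [mul_pow c, integral_const_mul]
  rw [Real.sqrt_mul (sq_nonneg c), Real.sqrt_sq hc]

theorem integral_conj_mul_self (f : α → ℂ) :
    ∫ x, (starRingEnd ℂ) (f x) * f x ∂μ = ((∫ x, ‖f x‖ ^ 2 ∂μ : ℝ) : ℂ) := by
  simp_rw [Complex.conj_mul', ← integral_complex_ofReal]
  push_cast
  rfl

end MeasureTheory

section InnerProductSpace

variable {F : Type*} [NormedAddCommGroup F] [InnerProductSpace ℝ F] {φ D : ℝ → F} {s : Set ℝ}

theorem abs_two_mul_inner_le {t : ℝ} (ht : 0 < t) (u v : F) :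
    |2 * inner ℝ u v| ≤ t * ‖u‖ ^ 2 + t⁻¹ * ‖v‖ ^ 2 :=
  calc |2 * inner ℝ u v| = 2 * |inner ℝ u v| := by rw [abs_mul, abs_two]
    _ ≤ 2 * ‖u‖ * ‖v‖ := by
      rw [mul_assoc]; exact mul_le_mul_of_nonneg_left (abs_real_inner_le_norm u v) zero_le_two
    _ ≤ t * ‖u‖ ^ 2 + t⁻¹ * ‖v‖ ^ 2 := two_mul_le_mul_sq_add_inv_mul_sq ht _ _

theorem aestronglyMeasurable_of_forall_hasDerivAt (hs : MeasurableSet s)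
    (hφ : ∀ x ∈ s, HasDerivAt φ (D x) x) : AEStronglyMeasurable φ (volume.restrict s) :=
  ContinuousOn.aestronglyMeasurable (fun x hx => (hφ x hx).continuousAt.continuousWithinAt) hs

theorem aestronglyMeasurable_deriv_of_forall_hasDerivAt [CompleteSpace F]
    (hs : MeasurableSet s) (hφ : ∀ x ∈ s, HasDerivAt φ (D x) x) :
    AEStronglyMeasurable D (volume.restrict s) :=
  (stronglyMeasurable_deriv φ).aestronglyMeasurable.congr <|
    (ae_restrict_iff' hs).2 <| ae_of_all _ fun x hx => (hφ x hx).deriv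

theorem aestronglyMeasurable_two_mul_inner [CompleteSpace F] (hs : MeasurableSet s)
    (hφ : ∀ x ∈ s, HasDerivAt φ (D x) x) :
    AEStronglyMeasurable (fun x => 2 * inner ℝ (φ x) (D x)) (volume.restrict s) :=
  ((aestronglyMeasurable_of_forall_hasDerivAt hs hφ).inner
    (aestronglyMeasurable_deriv_of_forall_hasDerivAt hs hφ)).const_mul 2

theorem integrableOn_two_mul_inner [CompleteSpace F] (hs : MeasurableSet s)
    (hφ : ∀ x ∈ s, HasDerivAt φ (D x) x) (hφ₂ : IntegrableOn (fun x => ‖φ x‖ ^ 2) s)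
    (hD₂ : IntegrableOn (fun x => ‖D x‖ ^ 2) s) :
    IntegrableOn (fun x => 2 * inner ℝ (φ x) (D x)) s :=
  (hφ₂.add hD₂).mono' (aestronglyMeasurable_two_mul_inner hs hφ) <| ae_of_all _ fun x => by
    simpa using abs_two_mul_inner_le one_pos (φ x) (D x)

theorem integral_abs_two_mul_inner_le {t : ℝ} (ht : 0 < t)
    (hφ₂ : IntegrableOn (fun x => ‖φ x‖ ^ 2) s) (hD₂ : IntegrableOn (fun x => ‖D x‖ ^ 2) s) :
    ∫ x in s, |2 * inner ℝ (φ x) (D x)| ≤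
      t * (∫ x in s, ‖φ x‖ ^ 2) + t⁻¹ * ∫ x in s, ‖D x‖ ^ 2 := by
  rw [← integral_const_mul, ← integral_const_mul,
    ← integral_add (hφ₂.const_mul t) (hD₂.const_mul t⁻¹)]
  exact integral_mono_of_nonneg (ae_of_all _ fun x => abs_nonneg _)
    ((hφ₂.const_mul t).add (hD₂.const_mul t⁻¹))
    (ae_of_all _ fun x => abs_two_mul_inner_le ht (φ x) (D x))

theorem sq_norm_sub_sq_norm_le_integral [CompleteSpace F] {a b x y : ℝ}
    (hφ : ∀ z ∈ Ioo a b, HasDerivAt φ (D z) z)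
    (hφ₂ : IntegrableOn (fun x => ‖φ x‖ ^ 2) (Ioo a b))
    (hD₂ : IntegrableOn (fun x => ‖D x‖ ^ 2) (Ioo a b)) (hx : x ∈ Ioo a b) (hy : y ∈ Ioo a b) :
    ‖φ x‖ ^ 2 - ‖φ y‖ ^ 2 ≤ ∫ z in Ioo a b, |2 * inner ℝ (φ z) (D z)| := by
  have hsub : uIcc y x ⊆ Ioo a b := ordConnected_Ioo.uIcc_subset hy hx
  have hint := integrableOn_two_mul_inner measurableSet_Ioo hφ hφ₂ hD₂
  rw [← intervalIntegral.integral_eq_sub_of_hasDerivAt (fun z hz => (hφ z (hsub hz)).norm_sq)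
    (hint.mono_set hsub).intervalIntegrable]
  refine (le_abs_self _).trans ?_
  rw [← Real.norm_eq_abs]
  refine intervalIntegral.norm_integral_le_integral_norm_uIoc.trans ?_
  simp only [Real.norm_eq_abs]
  exact setIntegral_mono_set hint.abs (ae_of_all _ fun z => abs_nonneg _)
    (uIoc_subset_uIcc.trans hsub).eventuallyLE

theorem sq_norm_le_of_forall_hasDerivAt [CompleteSpace F] {a b x t : ℝ}
    (hφ : ∀ z ∈ Ioo a b, HasDerivAt φ (D z) z)
    (hφ₂ : IntegrableOn (fun x => ‖φ x‖ ^ 2) (Ioo a b))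
    (hD₂ : IntegrableOn (fun x => ‖D x‖ ^ 2) (Ioo a b)) (hx : x ∈ Ioo a b) (ht : 0 < t) :
    ‖φ x‖ ^ 2 ≤
      ((b - a)⁻¹ + t) * (∫ z in Ioo a b, ‖φ z‖ ^ 2) + t⁻¹ * ∫ z in Ioo a b, ‖D z‖ ^ 2 := by
  have hab : a < b := hx.1.trans hx.2
  obtain ⟨y, hy, hy_le⟩ := exists_le_setAverage (by simpa using hab) (by simp) hφ₂
  rw [setAverage_eq, Real.volume_real_Ioo_of_le hab.le, smul_eq_mul] at hy_le
  linarith [sq_norm_sub_sq_norm_le_integral hφ hφ₂ hD₂ hx hy,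
    integral_abs_two_mul_inner_le ht hφ₂ hD₂]

end InnerProductSpace

section UnitInterval

variable {F : Type*} [NormedAddCommGroup F] {φ D : ℝ → F}

noncomputable def h1NormSq (φ D : ℝ → F) : ℝ :=
  (∫ x in Ioo (0 : ℝ) 1, ‖φ x‖ ^ 2) + ∫ x in Ioo (0 : ℝ) 1, ‖D x‖ ^ 2

theorem h1NormSq_eq_one_add (hnorm : ∫ x in Ioo (0 : ℝ) 1, ‖φ x‖ ^ 2 = 1) :
    h1NormSq φ D = 1 + ∫ x in Ioo (0 : ℝ) 1, ‖D x‖ ^ 2 := by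
  rw [h1NormSq, hnorm]

theorem one_le_h1NormSq (hnorm : ∫ x in Ioo (0 : ℝ) 1, ‖φ x‖ ^ 2 = 1) : 1 ≤ h1NormSq φ D := by
  rw [h1NormSq_eq_one_add hnorm, le_add_iff_nonneg_right]
  exact integral_nonneg fun x => sq_nonneg _

variable [InnerProductSpace ℝ F] [CompleteSpace F]
  (hφ : ∀ x ∈ Ioo (0 : ℝ) 1, HasDerivAt φ (D x) x)
  (hφ₂ : IntegrableOn (fun x => ‖φ x‖ ^ 2) (Ioo 0 1))
  (hD₂ : IntegrableOn (fun x => ‖D x‖ ^ 2) (Ioo 0 1))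
  (hnorm : ∫ x in Ioo (0 : ℝ) 1, ‖φ x‖ ^ 2 = 1)
include hφ hφ₂ hD₂ hnorm

theorem sq_norm_le_three_mul_sqrt_h1NormSq {x : ℝ} (hx : x ∈ Ioo 0 1) :
    ‖φ x‖ ^ 2 ≤ 3 * √(h1NormSq φ D) := by
  set t := √(h1NormSq φ D)
  have ht : 1 ≤ t := Real.one_le_sqrt.2 (one_le_h1NormSq hnorm)
  have hD_le : t⁻¹ * ∫ z in Ioo (0 : ℝ) 1, ‖D z‖ ^ 2 ≤ t := by
    rw [inv_mul_le_iff₀ (by positivity), ← sq,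
      Real.sq_sqrt (zero_le_one.trans (one_le_h1NormSq hnorm)), h1NormSq_eq_one_add hnorm]
    linarith
  have hbound := sq_norm_le_of_forall_hasDerivAt hφ hφ₂ hD₂ hx (t := t) (by positivity)
  rw [sub_zero, inv_one, hnorm, mul_one] at hbound
  linarith

theorem sq_two_mul_inner_le {x : ℝ} (hx : x ∈ Ioo 0 1) :
    (2 * inner ℝ (φ x) (D x)) ^ 2 ≤ 12 * √(h1NormSq φ D) * ‖D x‖ ^ 2 := by
  have hCS : inner ℝ (φ x) (D x) ^ 2 ≤ ‖φ x‖ ^ 2 * ‖D x‖ ^ 2 := by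
    rw [← mul_pow, ← sq_abs]
    exact pow_le_pow_left₀ (abs_nonneg _) (abs_real_inner_le_norm _ _) 2
  nlinarith [sq_norm_le_three_mul_sqrt_h1NormSq hφ hφ₂ hD₂ hnorm hx, sq_nonneg ‖D x‖]

theorem memLp_two_mul_inner :
    MemLp (fun x => 2 * inner ℝ (φ x) (D x)) 2 (volume.restrict (Ioo 0 1)) := by
  have hm := aestronglyMeasurable_two_mul_inner measurableSet_Ioo hφ
  refine (memLp_two_iff_integrable_sq hm).2 <|
    (hD₂.const_mul (12 * √(h1NormSq φ D))).mono' (hm.pow 2) ?_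
  filter_upwards [ae_restrict_mem measurableSet_Ioo] with x hx
  rw [Real.norm_eq_abs, abs_of_nonneg (sq_nonneg _)]
  exact sq_two_mul_inner_le hφ hφ₂ hD₂ hnorm hx

theorem sqrt_integral_sq_two_mul_inner_le :
    √(∫ x in Ioo (0 : ℝ) 1, (2 * inner ℝ (φ x) (D x)) ^ 2) ≤
      √12 * h1NormSq φ D ^ (3 / 4 : ℝ) := by
  set E := h1NormSq φ D
  have hE : 0 ≤ E := zero_le_one.trans (one_le_h1NormSq hnorm)
  have hD_le : ∫ z in Ioo (0 : ℝ) 1, ‖D z‖ ^ 2 ≤ E := by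
    linarith [h1NormSq_eq_one_add (D := D) hnorm]
  have hint : ∫ x in Ioo (0 : ℝ) 1, (2 * inner ℝ (φ x) (D x)) ^ 2 ≤ 12 * √E * E :=
    calc ∫ x in Ioo (0 : ℝ) 1, (2 * inner ℝ (φ x) (D x)) ^ 2
        ≤ ∫ x in Ioo (0 : ℝ) 1, 12 * √E * ‖D x‖ ^ 2 :=
          setIntegral_mono_on (memLp_two_mul_inner hφ hφ₂ hD₂ hnorm).integrable_sq
            (hD₂.const_mul _) measurableSet_Ioo fun x hx =>
              sq_two_mul_inner_le hφ hφ₂ hD₂ hnorm hx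
      _ ≤ 12 * √E * E := by
          rw [integral_const_mul]; exact mul_le_mul_of_nonneg_left hD_le (by positivity)
  have hpow : √(12 * √E * E) = √12 * E ^ (3 / 4 : ℝ) := by
    rw [mul_assoc, Real.sqrt_mul (by norm_num), Real.sqrt_eq_rpow E,
      ← Real.rpow_add_one' hE (by norm_num), Real.sqrt_eq_rpow (E ^ _), ← Real.rpow_mul hE]
    norm_num
  exact (Real.sqrt_le_sqrt hint).trans_eq hpow

end UnitInterval

/-- There is a universal constant `C` such that: if `ρ_k ≥ 0` with `Σ_k ρ_k = N < ∞`
and `(φ_k)` is an orthonormal family in `H¹(0,1)` (derivatives `D_k`) with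
`E = Σ_k ρ_k ‖φ_k‖_{H¹}² < ∞`, then the derivative
`n' = Σ_k ρ_k (φ_k' \overline{φ_k} + φ_k \overline{φ_k'})` of
`n(x) = Σ_k ρ_k |φ_k(x)|²` satisfies `‖n'‖_{L²(0,1)} ≤ C N^{1/4} E^{3/4}`. -/
theorem localDensityDeriv_L2_bound :
    ∃ C > (0 : ℝ), ∀ (ρ : ℕ → ℝ) (φ D : ℕ → ℝ → ℂ),
      (∀ k, 0 ≤ ρ k) → Summable ρ →
      (∀ k, ∀ x ∈ Ioo (0 : ℝ) 1, HasDerivAt (φ k) (D k x) x) →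
      (∀ k, IntegrableOn (fun x => ‖φ k x‖ ^ 2) (Ioo 0 1)) →
      (∀ k, IntegrableOn (fun x => ‖D k x‖ ^ 2) (Ioo 0 1)) →
      (∀ j k, (∫ x in Ioo (0 : ℝ) 1, (starRingEnd ℂ) (φ j x) * φ k x) =
        if j = k then 1 else 0) →
      Summable (fun k => ρ k *
        ((∫ x in Ioo (0 : ℝ) 1, ‖φ k x‖ ^ 2) + ∫ x in Ioo (0 : ℝ) 1, ‖D k x‖ ^ 2)) →
      Real.sqrt (∫ x in Ioo (0 : ℝ) 1,
          (∑' k, ρ k * (2 * ((starRingEnd ℂ) (φ k x) * D k x).re)) ^ 2) ≤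
        C * (∑' k, ρ k) ^ ((1 : ℝ) / 4) *
          (∑' k, ρ k * ((∫ y in Ioo (0 : ℝ) 1, ‖φ k y‖ ^ 2) +
            ∫ y in Ioo (0 : ℝ) 1, ‖D k y‖ ^ 2)) ^ ((3 : ℝ) / 4) := by
  refine ⟨√12, by positivity, fun ρ φ D hρ hρ_sum hφ hφ₂ hD₂ horth hE_sum => ?_⟩
  have hnorm : ∀ k, ∫ x in Ioo (0 : ℝ) 1, ‖φ k x‖ ^ 2 = 1 := fun k => by
    simpa [integral_conj_mul_self] using horth k k
  set E : ℕ → ℝ := fun k => h1NormSq (φ k) (D k)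
  have hE : ∀ k, 1 ≤ E k := fun k => one_le_h1NormSq (hnorm k)
  have hE_pow : Summable fun k => √12 * (ρ k * E k ^ (3 / 4 : ℝ)) :=
    Summable.mul_left _ <| hE_sum.of_nonneg_of_le
      (fun k => mul_nonneg (hρ k) (Real.rpow_nonneg (zero_le_one.trans (hE k)) _)) fun k =>
      mul_le_mul_of_nonneg_left (Real.rpow_le_self_of_one_le (hE k) (by norm_num)) (hρ k)
  have hg_le : ∀ k, √(∫ x in Ioo (0 : ℝ) 1, (ρ k * (2 * inner ℝ (φ k x) (D k x))) ^ 2) ≤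
      √12 * (ρ k * E k ^ (3 / 4 : ℝ)) := fun k => by
    rw [sqrt_integral_sq_const_mul (hρ k), mul_left_comm]
    exact mul_le_mul_of_nonneg_left
      (sqrt_integral_sq_two_mul_inner_le (hφ k) (hφ₂ k) (hD₂ k) (hnorm k)) (hρ k)
  have hg_sum := hE_pow.of_nonneg_of_le (fun k => Real.sqrt_nonneg _) hg_le
  simp only [Complex.re_conj_mul_eq_inner]
  calc √(∫ x in Ioo (0 : ℝ) 1, (∑' k, ρ k * (2 * inner ℝ (φ k x) (D k x))) ^ 2)
      ≤ ∑' k, √(∫ x in Ioo (0 : ℝ) 1, (ρ k * (2 * inner ℝ (φ k x) (D k x))) ^ 2) :=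
        sqrt_integral_sq_tsum_le (fun k =>
          (memLp_two_mul_inner (hφ k) (hφ₂ k) (hD₂ k) (hnorm k)).const_mul (ρ k)) hg_sum
    _ ≤ √12 * ∑' k, ρ k * E k ^ (3 / 4 : ℝ) :=
        (hg_sum.tsum_le_tsum hg_le hE_pow).trans_eq tsum_mul_left
    _ ≤ √12 * ((∑' k, ρ k) ^ (1 - 3 / 4 : ℝ) * (∑' k, ρ k * E k) ^ (3 / 4 : ℝ)) :=
        mul_le_mul_of_nonneg_left (Real.tsum_mul_rpow_le_weight_mul_rpow hρ
          (fun k => zero_le_one.trans (hE k)) hρ_sum hE_sum (by norm_num) (by norm_num))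
          (Real.sqrt_nonneg _)
    _ = √12 * (∑' k, ρ k) ^ ((1 : ℝ) / 4) * (∑' k, ρ k * E k) ^ ((3 : ℝ) / 4) := by
        norm_num [mul_assoc]
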